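/- arXiv:1902.03827 — 4 statements merged into one kernel-verified Lean document; each statement's English description precedes it below -/
import Mathlib

section
/- Recursive influence bound: Let P and Q be n×n row-stochastic matrices. Define, for a subset B ⊆ {1,…,n}, the influence Φ_P(s) = max over subsets B of size s of Σ_{i=1}^n Σ_{j∈B} P_{ij} (with Φ_P(0) = 0). Then for every δ > 0 and every s ∈ {0,…,n}, Φ_{PQ}(s) ≤ Φ_P(⌊δ·Φ_Q(s)⌋) + n/δ, where Φ_P is extended to nonnegative reals by Φ_P(x) = Φ_P(min(⌊x⌋, n)). -/
/-!
For `|B| = s`, the `PQ`-mass of `B` is `∑ i, ∑ k, P i k * c k`, where `c k ∈ [0, 1]` is the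
mass row `k` of `Q` puts on `B`, and `∑ k, c k ≤ Φ_Q(s)`. By Markov's inequality at most
`δ Φ_Q(s)` nodes are heavy (`c k ≥ 1/δ`); they carry at most `Φ_P(⌊δ Φ_Q(s)⌋)` of the mass
(using `c ≤ 1`), while in each row of `P` the light nodes carry at most `1/δ`.
-/

open Finset

/-- `Φ_P(s)`: the maximum total one-time influence of a set of `s` nodes,
i.e. the maximum over subsets `B` of cardinality `s` of `∑ i, ∑ j ∈ B, P i j`
(for `s = 0` the only such set is `∅`, giving `0`). -/
noncomputable def Phi {n : ℕ} (P : Matrix (Fin n) (Fin n) ℝ) (s : ℕ) : ℝ :=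
  sSup ((fun B : Finset (Fin n) => ∑ i, ∑ j ∈ B, P i j) ''
    {B : Finset (Fin n) | B.card = s})

/-- Extension of `Φ_P` to nonnegative real arguments: `Φ_P(x) = Φ_P(min ⌊x⌋ n)`. -/
noncomputable def PhiR {n : ℕ} (P : Matrix (Fin n) (Fin n) ℝ) (x : ℝ) : ℝ :=
  Phi P (min ⌊x⌋₊ n)

section Influence

variable {n : ℕ}

lemma sum_sum_le_Phi (P : Matrix (Fin n) (Fin n) ℝ) {s : ℕ} {B : Finset (Fin n)}
    (hB : B.card = s) : ∑ i, ∑ j ∈ B, P i j ≤ Phi P s :=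
  le_csSup ((Set.toFinite _).image _).bddAbove ⟨B, hB, rfl⟩

lemma Phi_le (P : Matrix (Fin n) (Fin n) ℝ) {s : ℕ} {c : ℝ} (hc : 0 ≤ c)
    (h : ∀ B : Finset (Fin n), B.card = s → ∑ i, ∑ j ∈ B, P i j ≤ c) : Phi P s ≤ c :=
  Real.sSup_le (by rintro _ ⟨B, hB, rfl⟩; exact h B hB) hc

variable {P : Matrix (Fin n) (Fin n) ℝ}

lemma Phi_nonneg (hP : ∀ i j, 0 ≤ P i j) (s : ℕ) : 0 ≤ Phi P s :=
  Real.sSup_nonneg <| by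
    rintro _ ⟨B, -, rfl⟩
    exact sum_nonneg fun i _ => sum_nonneg fun j _ => hP i j

lemma Phi_mono (hP : ∀ i j, 0 ≤ P i j) {a b : ℕ} (hab : a ≤ b) (hb : b ≤ n) :
    Phi P a ≤ Phi P b := by
  refine Phi_le P (Phi_nonneg hP b) fun B hB => ?_
  obtain ⟨C, hBC, -, hC⟩ :=
    exists_subsuperset_card_eq (subset_univ B) (hB ▸ hab) (by simpa using hb)
  calc ∑ i, ∑ j ∈ B, P i j
      ≤ ∑ i, ∑ j ∈ C, P i j :=
        sum_le_sum fun i _ => sum_le_sum_of_subset_of_nonneg hBC fun j _ _ => hP i j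
    _ ≤ Phi P b := sum_sum_le_Phi P hC

lemma PhiR_nonneg (hP : ∀ i j, 0 ≤ P i j) (x : ℝ) : 0 ≤ PhiR P x :=
  Phi_nonneg hP _

lemma PhiR_mono (hP : ∀ i j, 0 ≤ P i j) : Monotone (PhiR P) := fun _ _ hxy =>
  Phi_mono hP (min_le_min_right n (Nat.floor_le_floor hxy)) (min_le_right _ _)

lemma Phi_card_le_PhiR (hP : ∀ i j, 0 ≤ P i j) {A : Finset (Fin n)} {x : ℝ}
    (hA : (A.card : ℝ) ≤ x) : Phi P A.card ≤ PhiR P x :=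
  Phi_mono hP (le_min (Nat.le_floor hA) (card_le_univ A |>.trans_eq (Fintype.card_fin n)))
    (min_le_right _ _)

end Influence

section Weights

variable {ι : Type*} [Fintype ι]

lemma mul_card_filter_le_sum {c : ι → ℝ} (hc : ∀ k, 0 ≤ c k) (t : ℝ) :
    t * #{k | t ≤ c k} ≤ ∑ k, c k :=
  calc t * #{k | t ≤ c k}
      = #{k | t ≤ c k} • t := by rw [nsmul_eq_mul, mul_comm]
    _ ≤ ∑ k ∈ {k | t ≤ c k}, c k := card_nsmul_le_sum _ _ _ fun k hk => (mem_filter.1 hk).2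
    _ ≤ ∑ k, c k := sum_le_sum_of_subset_of_nonneg (subset_univ _) fun k _ _ => hc k

lemma sum_mul_le_sum_add [DecidableEq ι] {p c : ι → ℝ} (hp : ∀ k, 0 ≤ p k)
    (hp_sum : ∑ k, p k = 1) (A : Finset ι) {t : ℝ} (ht : 0 ≤ t) (hA : ∀ k ∈ A, c k ≤ 1)
    (hAc : ∀ k ∉ A, c k ≤ t) :
    ∑ k, p k * c k ≤ ∑ k ∈ A, p k + t := by
  have hAc_mass : ∑ k ∈ Aᶜ, p k ≤ 1 :=
    hp_sum ▸ sum_le_sum_of_subset_of_nonneg (subset_univ _) fun k _ _ => hp k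
  rw [← sum_add_sum_compl A]
  gcongr with k hk k hk
  · exact mul_le_of_le_one_right (hp k) (hA k hk)
  · calc ∑ k ∈ Aᶜ, p k * c k
        ≤ ∑ k ∈ Aᶜ, p k * t :=
          sum_le_sum fun k hk => mul_le_mul_of_nonneg_left (hAc k (mem_compl.1 hk)) (hp k)
      _ = (∑ k ∈ Aᶜ, p k) * t := (sum_mul _ _ _).symm
      _ ≤ t := mul_le_of_le_one_left ht hAc_mass

end Weights

lemma sum_sum_mul_le_PhiR_add {n : ℕ} {P : Matrix (Fin n) (Fin n) ℝ}
    (hP_nonneg : ∀ i j, 0 ≤ P i j) (hP_row : ∀ i, ∑ j, P i j = 1)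
    {c : Fin n → ℝ} (hc_nonneg : ∀ k, 0 ≤ c k) (hc_le_one : ∀ k, c k ≤ 1)
    {δ : ℝ} (hδ : 0 < δ) :
    ∑ i, ∑ k, P i k * c k ≤ PhiR P (δ * ∑ k, c k) + n / δ := by
  set A : Finset (Fin n) := {k | δ⁻¹ ≤ c k}
  have hA_card : (A.card : ℝ) ≤ δ * ∑ k, c k := by
    rw [← inv_mul_le_iff₀ hδ]
    exact mul_card_filter_le_sum hc_nonneg δ⁻¹
  have hrow (i : Fin n) : ∑ k, P i k * c k ≤ ∑ k ∈ A, P i k + δ⁻¹ :=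
    sum_mul_le_sum_add (hP_nonneg i) (hP_row i) A (inv_nonneg.2 hδ.le)
      (fun k _ => hc_le_one k) fun k hk => by
        simp only [A, mem_filter, mem_univ, true_and, not_le] at hk
        exact hk.le
  calc ∑ i, ∑ k, P i k * c k
      ≤ ∑ i, (∑ k ∈ A, P i k + δ⁻¹) := sum_le_sum fun i _ => hrow i
    _ = ∑ i, ∑ k ∈ A, P i k + n / δ := by
        rw [sum_add_distrib, sum_const, card_univ, Fintype.card_fin, nsmul_eq_mul, div_eq_mul_inv]
    _ ≤ PhiR P (δ * ∑ k, c k) + n / δ := by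
        gcongr
        exact (sum_sum_le_Phi P rfl).trans (Phi_card_le_PhiR hP_nonneg hA_card)

theorem recursive_influence_bound_general (n : ℕ) (P Q : Matrix (Fin n) (Fin n) ℝ)
    (hP_nonneg : ∀ i j, 0 ≤ P i j) (hP_row : ∀ i, ∑ j, P i j = 1)
    (hQ_nonneg : ∀ i j, 0 ≤ Q i j) (hQ_row : ∀ i, ∑ j, Q i j = 1)
    (δ : ℝ) (hδ : 0 < δ) (s : ℕ) :
    Phi (P * Q) s ≤ PhiR P (δ * Phi Q s) + n / δ := by
  refine Phi_le _ (add_nonneg (PhiR_nonneg hP_nonneg _) (by positivity)) fun B hB => ?_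
  set c : Fin n → ℝ := fun k => ∑ j ∈ B, Q k j
  have hc_nonneg (k : Fin n) : 0 ≤ c k := sum_nonneg fun j _ => hQ_nonneg k j
  have hc_le_one (k : Fin n) : c k ≤ 1 :=
    hQ_row k ▸ sum_le_sum_of_subset_of_nonneg (subset_univ B) fun j _ _ => hQ_nonneg k j
  have hmass : ∑ i, ∑ j ∈ B, (P * Q) i j = ∑ i, ∑ k, P i k * c k := by
    simp only [Matrix.mul_apply, c, mul_sum]
    exact sum_congr rfl fun i _ => sum_comm
  calc ∑ i, ∑ j ∈ B, (P * Q) i j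
      = ∑ i, ∑ k, P i k * c k := hmass
    _ ≤ PhiR P (δ * ∑ k, c k) + n / δ :=
        sum_sum_mul_le_PhiR_add hP_nonneg hP_row hc_nonneg hc_le_one hδ
    _ ≤ PhiR P (δ * Phi Q s) + n / δ := by
        gcongr
        exact PhiR_mono hP_nonneg (mul_le_mul_of_nonneg_left (sum_sum_le_Phi Q hB) hδ.le)

/-- Recursive influence bound: for row-stochastic `P, Q`, every `δ > 0` and
`s ∈ {0,…,n}`, `Φ_{PQ}(s) ≤ Φ_P(δ·Φ_Q(s)) + n/δ`. -/
theorem recursive_influence_bound (n : ℕ) (P Q : Matrix (Fin n) (Fin n) ℝ)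
    (hP_nonneg : ∀ i j, 0 ≤ P i j) (hP_row : ∀ i, ∑ j, P i j = 1)
    (hQ_nonneg : ∀ i j, 0 ≤ Q i j) (hQ_row : ∀ i, ∑ j, Q i j = 1)
    (δ : ℝ) (hδ : 0 < δ) (s : ℕ) (hs : s ≤ n) :
    Phi (P * Q) s ≤ PhiR P (δ * Phi Q s) + n / δ :=
  recursive_influence_bound_general n P Q hP_nonneg hP_row hQ_nonneg hQ_row δ hδ s
end

section
/- One-norm square-root bound for equal-neighbor matrices: If W ∈ {0,1}^{n×n} is symmetric with every row having at least one 1, dᵢ = Σⱼ W_{ij}, and P_{ij} = W_{ij}/dᵢ, then for every k ∈ N, (1/n)·max_j Σᵢ (Pᵏ)_{ij} ≤ 2·((1/n)·max_j Σᵢ P_{ij})^{1/2}. -/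
/-! The column sums `c_k = 1ᵀ Pᵏ` satisfy `c_k / d = Pᵏ (1 / d)`, because `P` is reversible
with respect to `d` (`d_i P_ij = W_ij` is symmetric), and `P` is a contraction of `ℓ²(d)`.
Hence the energy `∑ c_k(i)² / d_i` never exceeds its initial value `∑ 1 / d_i ≤ n`.
Cauchy–Schwarz applied to `c_{k+1}(j) = ∑_l P_lj c_k(l)`, with `P_lj ≤ 1 / d_l`, then gives
`c_{k+1}(j)² ≤ n · max_j ∑_l P_lj`. -/

open Finset Matrix

section ReversibleChain

variable {ι : Type*} [Fintype ι]

theorem sq_sum_mul_le_sum_mul_sum_mul_sq {p f : ι → ℝ} (hp : ∀ i, 0 ≤ p i) :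
    (∑ i, p i * f i) ^ 2 ≤ (∑ i, p i) * ∑ i, p i * f i ^ 2 :=
  sum_sq_le_sum_mul_sum_of_sq_le_mul _ (fun i _ => hp i)
    (fun i _ => mul_nonneg (hp i) (sq_nonneg _)) fun _ _ => le_of_eq (by ring)

variable {P : Matrix ι ι ℝ} {π : ι → ℝ}

theorem exists_one_le_sum_col [Nonempty ι] (hrow : ∀ i, ∑ j, P i j = 1) :
    ∃ j, 1 ≤ ∑ i, P i j := by
  obtain ⟨j, -, hj⟩ := exists_le_of_sum_le (f := fun _ => (1 : ℝ)) (g := fun j => ∑ i, P i j)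
    univ_nonempty (by rw [sum_comm]; simp [hrow])
  exact ⟨j, hj⟩

theorem sum_mul_mulVec_sq_le (hP : ∀ i j, 0 ≤ P i j) (hrow : ∀ i, ∑ j, P i j = 1)
    (hrev : ∀ i j, π i * P i j = π j * P j i) (hπ : ∀ i, 0 ≤ π i) (x : ι → ℝ) :
    ∑ i, π i * (P *ᵥ x) i ^ 2 ≤ ∑ i, π i * x i ^ 2 := by
  calc ∑ i, π i * (P *ᵥ x) i ^ 2 ≤ ∑ i, π i * ∑ j, P i j * x j ^ 2 := by
        gcongr with i
        · exact hπ i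
        simpa [mulVec, dotProduct, hrow i] using sq_sum_mul_le_sum_mul_sum_mul_sq (f := x) (hP i)
    _ = ∑ j, (∑ i, π j * P j i) * x j ^ 2 := by
        simp only [mul_sum, sum_mul, ← mul_assoc]
        rw [sum_comm]
        exact sum_congr rfl fun j _ => sum_congr rfl fun i _ => by rw [hrev]
    _ = ∑ i, π i * x i ^ 2 := by simp only [← mul_sum, hrow, mul_one]

theorem vecMul_div_eq_mulVec_div (hrev : ∀ i j, π i * P i j = π j * P j i)
    (hπ : ∀ i, π i ≠ 0) (v : ι → ℝ) : (v ᵥ* P) / π = P *ᵥ (v / π) := by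
  funext j
  simp only [Pi.div_apply, vecMul, mulVec, dotProduct, sum_div]
  refine sum_congr rfl fun l _ => ?_
  field_simp [hπ j, hπ l]
  linear_combination v l * hrev l j

theorem sum_vecMul_sq_div_le (hP : ∀ i j, 0 ≤ P i j) (hrow : ∀ i, ∑ j, P i j = 1)
    (hrev : ∀ i j, π i * P i j = π j * P j i) (hπ : ∀ i, 0 < π i) (v : ι → ℝ) :
    ∑ i, (v ᵥ* P) i ^ 2 / π i ≤ ∑ i, v i ^ 2 / π i := by
  have weighted (w : ι → ℝ) : ∑ i, w i ^ 2 / π i = ∑ i, π i * (w / π) i ^ 2 :=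
    sum_congr rfl fun i _ => by rw [Pi.div_apply]; field_simp [(hπ i).ne']
  rw [weighted, weighted, vecMul_div_eq_mulVec_div hrev fun i => (hπ i).ne']
  exact sum_mul_mulVec_sq_le hP hrow hrev (fun i => (hπ i).le) _

theorem sum_vecMul_pow_sq_div_le [DecidableEq ι] (hP : ∀ i j, 0 ≤ P i j)
    (hrow : ∀ i, ∑ j, P i j = 1) (hrev : ∀ i j, π i * P i j = π j * P j i)
    (hπ : ∀ i, 0 < π i) (v : ι → ℝ) (k : ℕ) :
    ∑ i, (v ᵥ* P ^ k) i ^ 2 / π i ≤ ∑ i, v i ^ 2 / π i := by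
  induction k with
  | zero => simp
  | succ k ih =>
    rw [pow_succ, ← vecMul_vecMul]
    exact (sum_vecMul_sq_div_le hP hrow hrev hπ _).trans ih

theorem vecMul_apply_sq_le (hP : ∀ i j, 0 ≤ P i j) (hle : ∀ i j, π i * P i j ≤ 1)
    (hπ : ∀ i, 0 < π i) (v : ι → ℝ) (j : ι) :
    (v ᵥ* P) j ^ 2 ≤ (∑ i, P i j) * ∑ i, v i ^ 2 / π i := by
  calc (v ᵥ* P) j ^ 2 = (∑ i, P i j * v i) ^ 2 := by
        simp only [vecMul, dotProduct, mul_comm]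
    _ ≤ (∑ i, P i j) * ∑ i, P i j * v i ^ 2 := sq_sum_mul_le_sum_mul_sum_mul_sq fun i => hP i j
    _ ≤ (∑ i, P i j) * ∑ i, v i ^ 2 / π i := by
        gcongr with i
        · exact sum_nonneg fun i _ => hP i j
        rw [le_div_iff₀ (hπ i)]
        linear_combination v i ^ 2 * hle i j

theorem vecMul_pow_succ_apply_sq_le [DecidableEq ι] (hP : ∀ i j, 0 ≤ P i j)
    (hrow : ∀ i, ∑ j, P i j = 1) (hrev : ∀ i j, π i * P i j = π j * P j i)
    (hle : ∀ i j, π i * P i j ≤ 1) (hπ : ∀ i, 0 < π i) (v : ι → ℝ) (k : ℕ) (j : ι) :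
    (v ᵥ* P ^ (k + 1)) j ^ 2 ≤ (∑ i, P i j) * ∑ i, v i ^ 2 / π i := by
  rw [pow_succ P, ← vecMul_vecMul]
  exact (vecMul_apply_sq_le hP hle hπ _ j).trans <| mul_le_mul_of_nonneg_left
    (sum_vecMul_pow_sq_div_le hP hrow hrev hπ v k) (sum_nonneg fun i _ => hP i j)

theorem sq_sum_pow_apply_le_card_mul [DecidableEq ι] (hP : ∀ i j, 0 ≤ P i j)
    (hrow : ∀ i, ∑ j, P i j = 1) (hrev : ∀ i j, π i * P i j = π j * P j i)
    (hle : ∀ i j, π i * P i j ≤ 1) (hπ : ∀ i, 1 ≤ π i) {S : ℝ} (hS : ∀ j, ∑ i, P i j ≤ S)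
    (k : ℕ) (j : ι) : (∑ i, (P ^ k) i j) ^ 2 ≤ Fintype.card ι * S := by
  have hπ0 (i : ι) : 0 < π i := one_pos.trans_le (hπ i)
  cases k with
  | zero =>
    have : Nonempty ι := ⟨j⟩
    obtain ⟨j₀, hj₀⟩ := exists_one_le_sum_col hrow
    have hcard : (1 : ℝ) ≤ Fintype.card ι := by exact_mod_cast Fintype.card_pos
    simpa [one_apply] using one_le_mul_of_one_le_of_one_le hcard (hj₀.trans (hS j₀))
  | succ k =>
    have hsum : ∑ i, (P ^ (k + 1)) i j = (1 ᵥ* P ^ (k + 1)) j := by simp [vecMul, dotProduct]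
    have hinv : ∑ i, (1 : ι → ℝ) i ^ 2 / π i ≤ Fintype.card ι := by
      calc ∑ i, (1 : ι → ℝ) i ^ 2 / π i ≤ ∑ _i : ι, (1 : ℝ) :=
            sum_le_sum fun i _ => by simpa using inv_le_one_of_one_le₀ (hπ i)
        _ = Fintype.card ι := by simp
    have hPj : 0 ≤ ∑ i, P i j := sum_nonneg fun i _ => hP i j
    rw [hsum, mul_comm]
    exact (vecMul_pow_succ_apply_sq_le hP hrow hrev hle hπ0 1 k j).trans <|
      mul_le_mul (hS j) hinv (sum_nonneg fun i _ => div_nonneg (sq_nonneg _) (hπ0 i).le)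
        (hPj.trans (hS j))

end ReversibleChain

/-- One-norm square-root bound for equal-neighbor matrices: for every `k`,
`(1/n)·max_j ∑ i (Pᵏ)_{ij} ≤ 2·((1/n)·max_j ∑ i P_{ij})^{1/2}`. -/
theorem equal_neighbor_sqrt_bound (n : ℕ) (hn : 0 < n)
    (W : Matrix (Fin n) (Fin n) ℝ)
    (hW_binary : ∀ i j, W i j = 0 ∨ W i j = 1)
    (hW_symm : ∀ i j, W i j = W j i)
    (d : Fin n → ℝ) (hd : ∀ i, d i = ∑ j, W i j) (hd_pos : ∀ i, 1 ≤ d i)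
    (P : Matrix (Fin n) (Fin n) ℝ) (hP : ∀ i j, P i j = W i j / d i)
    (k : ℕ) :
    (1 / (n : ℝ)) *
      (Finset.univ.sup' (Finset.univ_nonempty_iff.mpr (Fin.pos_iff_nonempty.mp hn))
        fun j => ∑ i, (P ^ k) i j) ≤
    2 * Real.sqrt ((1 / (n : ℝ)) *
      (Finset.univ.sup' (Finset.univ_nonempty_iff.mpr (Fin.pos_iff_nonempty.mp hn))
        fun j => ∑ i, P i j)) := by
  have hd0 (i : Fin n) : 0 < d i := one_pos.trans_le (hd_pos i)
  have hdP (i j : Fin n) : d i * P i j = W i j := by rw [hP, mul_div_cancel₀ _ (hd0 i).ne']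
  have hP0 (i j : Fin n) : 0 ≤ P i j := by
    rw [hP]; rcases hW_binary i j with h | h <;> simp [h, (hd0 i).le]
  have hrow (i : Fin n) : ∑ j, P i j = 1 := by
    simp only [hP, ← sum_div, ← hd, div_self (hd0 i).ne']
  have hrev (i j : Fin n) : d i * P i j = d j * P j i := by rw [hdP, hdP, hW_symm]
  have hle (i j : Fin n) : d i * P i j ≤ 1 := by rcases hW_binary i j with h | h <;> simp [hdP, h]
  set S := univ.sup' _ fun j => ∑ i, P i j
  obtain ⟨j, -, hj⟩ := exists_mem_eq_sup' (univ_nonempty_iff.mpr (Fin.pos_iff_nonempty.mp hn))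
    fun j => ∑ i, (P ^ k) i j
  have hcol := sq_sum_pow_apply_le_card_mul hP0 hrow hrev hle hd_pos (S := S)
    (fun j => le_sup' (fun j => ∑ i, P i j) (mem_univ j)) k j
  rw [Fintype.card_fin] at hcol
  have hn' : (0 : ℝ) < n := by exact_mod_cast hn
  rw [hj]
  calc 1 / (n : ℝ) * ∑ i, (P ^ k) i j ≤ √(1 / n * S) := by
        refine Real.le_sqrt_of_sq_le ?_
        calc (1 / (n : ℝ) * ∑ i, (P ^ k) i j) ^ 2
            = (1 / n) ^ 2 * (∑ i, (P ^ k) i j) ^ 2 := by ring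
          _ ≤ (1 / n) ^ 2 * (n * S) := by gcongr
          _ = 1 / n * S := by field_simp
    _ ≤ 2 * √(1 / n * S) := by linarith [Real.sqrt_nonneg (1 / n * S)]
end

section
/- For an equal-neighbor matrix P of an undirected graph (P_{ij} = W_{ij}/dᵢ with W symmetric binary, dᵢ ≥ 1), every column satisfies the bound: for all k ≥ 1, δ > 0, and every column j, (1/n)Σᵢ (Pᵏ)_{ij} ≤ δ·(1/n)Σᵢ P_{ij} + 1/δ. In particular, choosing δ = ((1/n)Σᵢ P_{ij})^{−1/2}, (1/n)Σᵢ(Pᵏ)_{ij} ≤ 2((1/n)Σᵢ P_{ij})^{1/2}. -/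
/-!
Write `Pᵏ = Pᵏ⁻¹ P` and let `c_h` be the `h`-th column sum of `Pᵏ⁻¹`, so that the `j`-th column
sum of `Pᵏ` is `∑ₕ c_h P_hj`. Symmetry of `W` gives `dᵀ P = dᵀ`, and with `1 ≤ d` this yields
`c_h ≤ d_h` by induction; since `P_hj ≤ 1 / d_h`, every term satisfies `c_h P_hj ≤ 1`, and for such
a product `c p ≤ δ p + c / δ` (if `p ≥ 1/δ` then `c ≤ 1/p ≤ δ`). Summing over `h` and using that
`Pᵏ⁻¹` is row-stochastic (`∑ₕ c_h = n`) gives the first bound; `δ = a^{-1/2}`, for `a` the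
normalised column sum of `P`, gives the second.
-/

open Finset Matrix

theorem mul_le_mul_add_div_of_mul_le_one {c p δ : ℝ} (hc : 0 ≤ c) (hp : 0 ≤ p)
    (hcp : c * p ≤ 1) (hδ : 0 < δ) : c * p ≤ δ * p + c / δ := by
  rcases le_total 1 (δ * p) with hδp | hδp
  · have hcδ : c ≤ δ := by nlinarith
    calc c * p ≤ δ * p := by gcongr
      _ ≤ δ * p + c / δ := le_add_of_nonneg_right (by positivity)
  · have hcp_le : c * p ≤ c / δ := by rw [le_div_iff₀ hδ]; nlinarith
    exact hcp_le.trans (le_add_of_nonneg_left (by positivity))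

theorem le_two_mul_sqrt_of_forall_le_mul_add_inv {x a : ℝ} (ha : 0 ≤ a)
    (h : ∀ δ : ℝ, 0 < δ → x ≤ δ * a + 1 / δ) : x ≤ 2 * √a := by
  rcases ha.eq_or_lt with rfl | ha
  · refine le_of_forall_pos_lt_add fun ε hε => ?_
    have := h (2 / ε) (by positivity)
    simp only [mul_zero, zero_add, one_div_div] at this
    simp only [Real.sqrt_zero, mul_zero, zero_add]
    linarith
  · have hs : 0 < √a := Real.sqrt_pos.mpr ha
    convert h (√a)⁻¹ (inv_pos.mpr hs) using 1
    rw [one_div, inv_inv, inv_mul_eq_div, Real.div_sqrt]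
    ring

theorem one_vecMul_apply {m n α : Type*} [Fintype m] [NonAssocSemiring α] (M : Matrix m n α)
    (j : n) :
    (1 ᵥ* M) j = ∑ i, M i j := by
  simp [vecMul, dotProduct]

section RowStochastic

variable {ι : Type*} [Fintype ι] [DecidableEq ι] {P : Matrix ι ι ℝ}

theorem one_vecMul_pow_le (hP : ∀ i j, 0 ≤ P i j) {d : ι → ℝ} (hd : ∀ i, 1 ≤ d i)
    (hdP : d ᵥ* P ≤ d) (m : ℕ) : 1 ᵥ* P ^ m ≤ d := by
  induction m with
  | zero => simpa [Pi.le_def] using hd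
  | succ m ih =>
    rw [pow_succ, ← vecMul_vecMul]
    refine le_trans (fun j => ?_) hdP
    exact sum_le_sum fun g _ => mul_le_mul_of_nonneg_right (ih g) (hP g j)

theorem one_vecMul_pow_succ_le (hP : P ∈ rowStochastic ℝ ι) (m : ℕ) (j : ι)
    (hmass : ∀ h, (1 ᵥ* P ^ m) h * P h j ≤ 1) {δ : ℝ} (hδ : 0 < δ) :
    (1 ᵥ* P ^ (m + 1)) j ≤ δ * (1 ᵥ* P) j + Fintype.card ι / δ := by
  set c := 1 ᵥ* P ^ m
  have hc : ∀ h, 0 ≤ c h :=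
    nonneg_vecMul_of_mem_rowStochastic (pow_mem hP m) fun _ => (zero_le_one : (0 : ℝ) ≤ 1)
  have htotal : ∑ h, c h = Fintype.card ι := by
    have : c ⬝ᵥ 1 = (1 : ι → ℝ) ⬝ᵥ 1 := by rw [← dotProduct_mulVec, (pow_mem hP m).2]
    simpa [dotProduct] using this
  calc (1 ᵥ* P ^ (m + 1)) j = ∑ h, c h * P h j := by rw [pow_succ, ← vecMul_vecMul]; rfl
    _ ≤ ∑ h, (δ * P h j + c h / δ) := sum_le_sum fun h _ =>
          mul_le_mul_add_div_of_mul_le_one (hc h) (nonneg_of_mem_rowStochastic hP) (hmass h) hδ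
    _ = δ * (1 ᵥ* P) j + Fintype.card ι / δ := by
          rw [sum_add_distrib, ← mul_sum, ← sum_div, htotal, one_vecMul_apply]

end RowStochastic

section EqualNeighbor

variable {ι : Type*} [Fintype ι] {W P : Matrix ι ι ℝ} {d : ι → ℝ}

theorem mem_rowStochastic_of_eq_div_rowSum [DecidableEq ι] (hW : ∀ i j, 0 ≤ W i j)
    (hd : ∀ i, d i = ∑ j, W i j) (hd_pos : ∀ i, 0 < d i) (hP : ∀ i j, P i j = W i j / d i) :
    P ∈ rowStochastic ℝ ι := by
  refine mem_rowStochastic_iff_sum.2 ⟨fun i j => ?_, fun i => ?_⟩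
  · rw [hP]
    exact div_nonneg (hW i j) (hd_pos i).le
  · simp only [hP, ← sum_div, ← hd i, div_self (hd_pos i).ne']

theorem vecMul_eq_of_eq_div_rowSum (hW_symm : ∀ i j, W i j = W j i)
    (hd : ∀ i, d i = ∑ j, W i j) (hd_pos : ∀ i, 0 < d i) (hP : ∀ i j, P i j = W i j / d i) :
    d ᵥ* P = d := by
  ext j
  calc (d ᵥ* P) j = ∑ g, W j g := by
        refine sum_congr rfl fun g _ => ?_
        dsimp only
        rw [hP, hW_symm, mul_div_cancel₀ _ (hd_pos g).ne']
    _ = d j := (hd j).symm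

end EqualNeighbor

theorem equal_neighbor_column_bounds_general (n : ℕ)
    (W : Matrix (Fin n) (Fin n) ℝ)
    (hW_binary : ∀ i j, W i j = 0 ∨ W i j = 1)
    (hW_symm : ∀ i j, W i j = W j i)
    (d : Fin n → ℝ) (hd : ∀ i, d i = ∑ j, W i j) (hd_pos : ∀ i, 1 ≤ d i)
    (P : Matrix (Fin n) (Fin n) ℝ) (hP : ∀ i j, P i j = W i j / d i) :
    ∀ k : ℕ, 1 ≤ k → ∀ j : Fin n,
      (∀ δ : ℝ, 0 < δ →
        (1 / (n : ℝ)) * ∑ i, (P ^ k) i j ≤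
          δ * ((1 / (n : ℝ)) * ∑ i, P i j) + 1 / δ) ∧
      (1 / (n : ℝ)) * ∑ i, (P ^ k) i j ≤
        2 * Real.sqrt ((1 / (n : ℝ)) * ∑ i, P i j) := by
  have hW_mem : ∀ i j, W i j ∈ Set.Icc (0 : ℝ) 1 := fun i j => by
    rcases hW_binary i j with h | h <;> simp [h]
  have hd_pos' : ∀ i, 0 < d i := fun i => one_pos.trans_le (hd_pos i)
  have hP_stoch := mem_rowStochastic_of_eq_div_rowSum (fun i j => (hW_mem i j).1) hd hd_pos' hP
  have hcol :=
    one_vecMul_pow_le hP_stoch.1 hd_pos (vecMul_eq_of_eq_div_rowSum hW_symm hd hd_pos' hP).le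
  intro k hk j
  obtain ⟨m, rfl⟩ := Nat.exists_eq_add_of_le' hk
  have hmass : ∀ h, (1 ᵥ* P ^ m) h * P h j ≤ 1 := fun h => calc
    _ ≤ d h * P h j := mul_le_mul_of_nonneg_right (hcol m h) (hP_stoch.1 h j)
    _ = W h j := by rw [hP, mul_div_cancel₀ _ (hd_pos' h).ne']
    _ ≤ 1 := (hW_mem h j).2
  have hbound : ∀ δ : ℝ, 0 < δ → (1 / (n : ℝ)) * ∑ i, (P ^ (m + 1)) i j ≤
      δ * ((1 / (n : ℝ)) * ∑ i, P i j) + 1 / δ := by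
    intro δ hδ
    have key := one_vecMul_pow_succ_le hP_stoch m j hmass hδ
    rw [one_vecMul_apply, one_vecMul_apply, Fintype.card_fin] at key
    calc _ ≤ (1 / (n : ℝ)) * (δ * ∑ i, P i j + n / δ) := by gcongr
      _ = δ * ((1 / (n : ℝ)) * ∑ i, P i j) + (n / n) / δ := by ring
      -- `n / n ≤ 1` rather than `= 1`, so that `n = 0` needs no separate case
      _ ≤ _ := by gcongr; exact div_self_le_one _
  have hcol_nonneg : 0 ≤ (1 / (n : ℝ)) * ∑ i, P i j :=
    mul_nonneg (by positivity) (sum_nonneg fun i _ => hP_stoch.1 i j)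
  exact ⟨hbound, le_two_mul_sqrt_of_forall_le_mul_add_inv hcol_nonneg hbound⟩

/-- Per-column bounds for powers of an equal-neighbor matrix:
`(1/n)∑ᵢ(Pᵏ)ᵢⱼ ≤ δ·(1/n)∑ᵢPᵢⱼ + 1/δ` for all `δ > 0`, and hence
`(1/n)∑ᵢ(Pᵏ)ᵢⱼ ≤ 2((1/n)∑ᵢPᵢⱼ)^{1/2}`. -/
theorem equal_neighbor_column_bounds (n : ℕ) (hn : 0 < n)
    (W : Matrix (Fin n) (Fin n) ℝ)
    (hW_binary : ∀ i j, W i j = 0 ∨ W i j = 1)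
    (hW_symm : ∀ i j, W i j = W j i)
    (d : Fin n → ℝ) (hd : ∀ i, d i = ∑ j, W i j) (hd_pos : ∀ i, 1 ≤ d i)
    (P : Matrix (Fin n) (Fin n) ℝ) (hP : ∀ i j, P i j = W i j / d i) :
    ∀ k : ℕ, 1 ≤ k → ∀ j : Fin n,
      (∀ δ : ℝ, 0 < δ →
        (1 / (n : ℝ)) * ∑ i, (P ^ k) i j ≤
          δ * ((1 / (n : ℝ)) * ∑ i, P i j) + 1 / δ) ∧
      (1 / (n : ℝ)) * ∑ i, (P ^ k) i j ≤
        2 * Real.sqrt ((1 / (n : ℝ)) * ∑ i, P i j) :=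
  equal_neighbor_column_bounds_general n W hW_binary hW_symm d hd hd_pos P hP
end

section
/- For equal-neighbor sequences, one-time wisdom implies pre-uniform wisdom: if {P^{[n]}} is a sequence of equal-neighbor matrices (P^{[n]} = diag(W^{[n]}1)⁻¹W^{[n]} with W^{[n]} symmetric binary, positive row sums) and lim_{n→∞} (1/n)‖P^{[n]}‖₁ = 0, then lim_{n→∞} sup_{k∈N} (1/n)‖(P^{[n]})ᵏ‖₁ = 0. -/
open Filter

lemma col_sum_le_phi {n : ℕ} (M : Matrix (Fin n) (Fin n) ℝ) (j : Fin n) :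
    ∑ i, M i j ≤ Phi M 1 := by
  have hmem : (∑ i, M i j) ∈ ((fun B : Finset (Fin n) => ∑ i, ∑ j ∈ B, M i j) ''
      {B : Finset (Fin n) | B.card = 1}) := ⟨{j}, by simp, by simp⟩
  exact le_csSup ((Set.toFinite _).image _).bddAbove hmem

lemma phi_le {n : ℕ} (M : Matrix (Fin n) (Fin n) ℝ) {a : ℝ} (ha : 0 ≤ a)
    (h : ∀ j, ∑ i, M i j ≤ a) : Phi M 1 ≤ a := by
  refine Real.sSup_le ?_ ha
  rintro x ⟨B, hB, rfl⟩
  obtain ⟨j, rfl⟩ := Finset.card_eq_one.mp hB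
  simpa using h j


lemma phi_nonneg {n : ℕ} (M : Matrix (Fin n) (Fin n) ℝ) (h : ∀ i j, 0 ≤ M i j) :
    0 ≤ Phi M 1 := by
  refine Real.sSup_nonneg ?_
  rintro x ⟨B, hB, rfl⟩
  exact Finset.sum_nonneg fun i _ => Finset.sum_nonneg fun j _ => h i j

lemma pow_entry_nonneg {n : ℕ} (M : Matrix (Fin n) (Fin n) ℝ) (h : ∀ i j, 0 ≤ M i j) :
    ∀ (k : ℕ) (i j : Fin n), 0 ≤ (M ^ k) i j := by
  intro k
  induction k with
  | zero =>
    intro i j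
    simp only [pow_zero, Matrix.one_apply]
    split <;> norm_num
  | succ m ih =>
    intro i j
    rw [pow_succ, Matrix.mul_apply]
    exact Finset.sum_nonneg fun l _ => mul_nonneg (ih i l) (h l j)

lemma key_bound {n : ℕ} (hn : 0 < n)
    (W : Matrix (Fin n) (Fin n) ℝ)
    (hbin : ∀ i j, W i j = 0 ∨ W i j = 1)
    (hsym : ∀ i j, W i j = W j i)
    (d : Fin n → ℝ) (hd : ∀ i, d i = ∑ j, W i j)
    (hdpos : ∀ i, 1 ≤ d i)
    (P : Matrix (Fin n) (Fin n) ℝ)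
    (hP : ∀ i j, P i j = W i j / d i)
    (k : ℕ) : Phi (P ^ k) 1 ≤ Real.sqrt (n * Phi P 1) := by
  have hd0 : ∀ i, 0 < d i := fun i => lt_of_lt_of_le one_pos (hdpos i)
  have hdne : ∀ i, d i ≠ 0 := fun i => ne_of_gt (hd0 i)
  have hW0 : ∀ i j, 0 ≤ W i j := fun i j => by rcases hbin i j with h | h <;> rw [h] <;> norm_num
  have hPnn : ∀ i j, 0 ≤ P i j := fun i j => by
    rw [hP]; exact div_nonneg (hW0 i j) (hd0 i).le
  have hrev : ∀ i j, d i * P i j = W i j := fun i j => by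
    rw [hP, mul_comm, div_mul_cancel₀ _ (hdne i)]
  have hrev2 : ∀ i j, d i * P i j = d j * P j i := fun i j => by
    rw [hrev, hrev, hsym]
  have hrow : ∀ i, ∑ j, P i j = 1 := fun i => by
    have h1 : ∑ j, P i j = (∑ j, W i j) / d i := by
      rw [Finset.sum_div]; exact Finset.sum_congr rfl fun j _ => hP i j
    rw [h1, ← hd, div_self (hdne i)]
  set c : ℕ → Fin n → ℝ := fun m j => ∑ i, (P ^ m) i j with hc
  have hc_succ : ∀ m j, c (m+1) j = ∑ l, c m l * P l j := by
    intro m j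
    simp only [hc, pow_succ, Matrix.mul_apply]
    rw [Finset.sum_comm]
    exact Finset.sum_congr rfl fun l _ => by rw [Finset.sum_mul]
  have hc0 : ∀ j, c 0 j = 1 := fun j => by
    simp [hc, Matrix.one_apply]
  have hnpos : (0:ℝ) < n := by exact_mod_cast hn
  -- S_m ≤ n
  have hS : ∀ m, ∑ l, (c m l)^2 / d l ≤ (n : ℝ) := by
    intro m
    induction m with
    | zero =>
      calc ∑ l, (c 0 l)^2 / d l ≤ ∑ _l : Fin n, (1:ℝ) := by
            refine Finset.sum_le_sum fun l _ => ?_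
            rw [hc0, one_pow, div_le_one (hd0 l)]
            exact hdpos l
        _ = (n : ℝ) := by simp
    | succ m ih =>
      refine le_trans ?_ ih
      have expand : ∀ l, c (m+1) l = d l * ∑ i, P l i * (c m i / d i) := by
        intro l
        rw [hc_succ, Finset.mul_sum]
        refine Finset.sum_congr rfl fun i _ => ?_
        have h2 : d l * (P l i * (c m i / d i)) = (d l * P l i) * (c m i / d i) := by ring
        rw [h2, hrev2 l i]
        have h3 : (d i * P i l) * (c m i / d i) = (d i / d i) * (P i l * c m i) := by ring
        rw [h3, div_self (hdne i), one_mul, mul_comm]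
      calc ∑ l, (c (m+1) l)^2 / d l
          = ∑ l, d l * (∑ i, P l i * (c m i / d i))^2 := by
            refine Finset.sum_congr rfl fun l _ => ?_
            rw [expand l]
            have h3 : (d l * (∑ i, P l i * (c m i / d i)))^2 / d l
                = (d l / d l) * (d l * (∑ i, P l i * (c m i / d i))^2) := by ring
            rw [h3, div_self (hdne l), one_mul]
        _ ≤ ∑ l, d l * (∑ i, P l i * (c m i / d i)^2) := by
            refine Finset.sum_le_sum fun l _ => ?_
            refine mul_le_mul_of_nonneg_left ?_ (hd0 l).le
            have cs := Finset.sum_mul_sq_le_sq_mul_sq Finset.univ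
              (fun i => Real.sqrt (P l i)) (fun i => Real.sqrt (P l i) * (c m i / d i))
            rw [Finset.sum_congr rfl (fun i _ => by
              rw [← mul_assoc, Real.mul_self_sqrt (hPnn l i)] :
              ∀ i ∈ Finset.univ, Real.sqrt (P l i) * (Real.sqrt (P l i) * (c m i / d i))
                = P l i * (c m i / d i))] at cs
            rw [Finset.sum_congr rfl (fun i _ => Real.sq_sqrt (hPnn l i) :
              ∀ i ∈ Finset.univ, Real.sqrt (P l i) ^ 2 = P l i)] at cs
            rw [Finset.sum_congr rfl (fun i _ => by
              rw [mul_pow, Real.sq_sqrt (hPnn l i)] :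
              ∀ i ∈ Finset.univ, (Real.sqrt (P l i) * (c m i / d i))^2
                = P l i * (c m i / d i)^2)] at cs
            rw [hrow l, one_mul] at cs
            exact cs
        _ = ∑ l, ∑ i, (d l * P l i) * (c m i / d i)^2 := by
            refine Finset.sum_congr rfl fun l _ => ?_
            rw [Finset.mul_sum]
            exact Finset.sum_congr rfl fun i _ => by ring
        _ = ∑ i, ∑ l, (d l * P l i) * (c m i / d i)^2 := Finset.sum_comm
        _ = ∑ i, (c m i)^2 / d i := by
            refine Finset.sum_congr rfl fun i _ => ?_
            rw [Finset.sum_congr rfl (fun l _ => by rw [hrev2 l i] :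
              ∀ l ∈ Finset.univ, (d l * P l i) * (c m i / d i)^2
                = (d i * P i l) * (c m i / d i)^2)]
            rw [← Finset.sum_mul, ← Finset.mul_sum, hrow i, mul_one]
            have h3 : d i * (c m i / d i)^2 = (d i / d i) * ((c m i)^2 / d i) := by ring
            rw [h3, div_self (hdne i), one_mul]
  have hc1_le : ∀ j, c 1 j ≤ Phi P 1 := fun j => by
    have h1 := col_sum_le_phi P j
    simpa [hc, pow_one] using h1
  have hphi1 : 1 ≤ Phi P 1 := by
    have hsum : ∑ j, c 1 j = (n:ℝ) := by
      simp only [hc, pow_one]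
      rw [Finset.sum_comm]
      rw [Finset.sum_congr rfl (fun i _ => hrow i)]
      simp
    have hle : (n:ℝ) ≤ n * Phi P 1 := by
      calc (n:ℝ) = ∑ j, c 1 j := hsum.symm
        _ ≤ ∑ _j : Fin n, Phi P 1 := Finset.sum_le_sum fun j _ => hc1_le j
        _ = n * Phi P 1 := by rw [Finset.sum_const]; simp [mul_comm]
    exact le_of_mul_le_mul_left (by linarith) hnpos
  have hφnn : (0:ℝ) ≤ Phi P 1 := le_trans zero_le_one hphi1
  cases k with
  | zero =>
    have h1 : Phi (P ^ 0) 1 ≤ 1 := phi_le _ zero_le_one fun j => (hc0 j).le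
    refine h1.trans ?_
    rw [show (1:ℝ) = Real.sqrt 1 from Real.sqrt_one.symm]
    refine Real.sqrt_le_sqrt ?_
    have h2 := mul_le_mul (Nat.one_le_cast.mpr hn) hphi1 zero_le_one hnpos.le
    simpa using h2
  | succ m =>
    refine phi_le _ (Real.sqrt_nonneg _) fun j => ?_
    have hcol : ∑ i, (P ^ (m+1)) i j = ∑ l, c m l * P l j := hc_succ m j
    rw [hcol]
    have hsne : ∀ l, Real.sqrt (d l) ≠ 0 := fun l => Real.sqrt_ne_zero'.mpr (hd0 l)
    have hab : ∀ l ∈ Finset.univ, c m l * P l j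
        = (c m l / Real.sqrt (d l)) * (Real.sqrt (d l) * P l j) := fun l _ => by
      have h3 : c m l / Real.sqrt (d l) * (Real.sqrt (d l) * P l j)
          = (Real.sqrt (d l) / Real.sqrt (d l)) * (c m l * P l j) := by ring
      rw [h3, div_self (hsne l), one_mul]
    rw [Finset.sum_congr rfl hab]
    have cs := Real.sum_mul_le_sqrt_mul_sqrt Finset.univ
      (fun l => c m l / Real.sqrt (d l)) (fun l => Real.sqrt (d l) * P l j)
    refine cs.trans ?_
    have ha2 : ∑ l, (c m l / Real.sqrt (d l))^2 = ∑ l, (c m l)^2 / d l := by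
      refine Finset.sum_congr rfl fun l _ => ?_
      rw [div_pow, Real.sq_sqrt (hd0 l).le]
    have hb2 : ∑ l, (Real.sqrt (d l) * P l j)^2 = ∑ l, P l j := by
      refine Finset.sum_congr rfl fun l _ => ?_
      have hw2 : W l j * W l j = W l j := by rcases hbin l j with h | h <;> rw [h] <;> ring
      rw [mul_pow, Real.sq_sqrt (hd0 l).le]
      have h3 : d l * (W l j / d l)^2 = (d l / d l) * ((W l j * W l j) / d l) := by ring
      rw [hP l j, h3, div_self (hdne l), one_mul, hw2, ← hP l j]
    rw [ha2, hb2]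
    have h4 : Real.sqrt (∑ l, (c m l)^2 / d l) ≤ Real.sqrt n := Real.sqrt_le_sqrt (hS m)
    have h5 : Real.sqrt (∑ l, P l j) ≤ Real.sqrt (Phi P 1) := by
      refine Real.sqrt_le_sqrt ?_
      have := hc1_le j
      simpa [hc, pow_one] using this
    calc Real.sqrt (∑ l, (c m l)^2 / d l) * Real.sqrt (∑ l, P l j)
        ≤ Real.sqrt n * Real.sqrt (Phi P 1) :=
          mul_le_mul h4 h5 (Real.sqrt_nonneg _) (Real.sqrt_nonneg _)
      _ = Real.sqrt (n * Phi P 1) := (Real.sqrt_mul hnpos.le _).symm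


/-- For equal-neighbor sequences, one-time wisdom implies pre-uniform wisdom:
if `(1/n)‖P^{[n]}‖₁ → 0` then `sup_k (1/n)‖(P^{[n]})ᵏ‖₁ → 0`. -/
theorem one_time_wise_implies_pre_uniformly_wise
    (W : (n : ℕ) → Matrix (Fin n) (Fin n) ℝ)
    (hW_binary : ∀ (n : ℕ) (i j : Fin n), W n i j = 0 ∨ W n i j = 1)
    (hW_symm : ∀ (n : ℕ) (i j : Fin n), W n i j = W n j i)
    (d : (n : ℕ) → Fin n → ℝ) (hd : ∀ (n : ℕ) (i : Fin n), d n i = ∑ j, W n i j)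
    (hd_pos : ∀ (n : ℕ) (i : Fin n), 1 ≤ d n i)
    (P : (n : ℕ) → Matrix (Fin n) (Fin n) ℝ)
    (hP : ∀ (n : ℕ) (i j : Fin n), P n i j = W n i j / d n i)
    (h_one_time : Tendsto (fun n => Phi (P n) 1 / n) atTop (nhds 0)) :
    Tendsto (fun n => ⨆ k : ℕ, Phi ((P n) ^ k) 1 / n) atTop (nhds 0) := by
  have hPnn : ∀ (n : ℕ) (i j : Fin n), 0 ≤ P n i j := fun n i j => by
    rw [hP]
    have hW0 : 0 ≤ W n i j := by rcases hW_binary n i j with h | h <;> rw [h] <;> norm_num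
    exact div_nonneg hW0 (zero_le_one.trans (hd_pos n i))
  have hphinn : ∀ (n k : ℕ), 0 ≤ Phi ((P n) ^ k) 1 := fun n k =>
    phi_nonneg _ (pow_entry_nonneg (P n) (hPnn n) k)
  have key : ∀ n : ℕ, 0 < n → ∀ k, Phi ((P n) ^ k) 1 ≤ Real.sqrt ((n : ℝ) * Phi (P n) 1) :=
    fun n hn k =>
      key_bound hn (W n) (hW_binary n) (hW_symm n) (d n) (hd n) (hd_pos n) (P n) (hP n) k
  have hupper : ∀ n : ℕ, 0 < n → ∀ k : ℕ,
      Phi ((P n) ^ k) 1 / n ≤ Real.sqrt (Phi (P n) 1 / n) := by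
    intro n hn k
    have hnpos : (0:ℝ) < n := by exact_mod_cast hn
    rw [div_le_iff₀ hnpos]
    refine (key n hn k).trans ?_
    have h1 : (n : ℝ) * Phi (P n) 1 = (Phi (P n) 1 / n) * (n : ℝ) ^ 2 := by
      field_simp
    rw [h1, Real.sqrt_mul (div_nonneg (phi_nonneg _ (hPnn n)) hnpos.le),
      Real.sqrt_sq hnpos.le]
  have hbdd : ∀ n : ℕ, 0 < n → BddAbove (Set.range fun k : ℕ => Phi ((P n) ^ k) 1 / n) :=
    fun n hn => ⟨Real.sqrt (Phi (P n) 1 / n), by rintro x ⟨k, rfl⟩; exact hupper n hn k⟩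
  refine tendsto_of_tendsto_of_tendsto_of_le_of_le' (g := fun _ => (0:ℝ))
    (h := fun n : ℕ => Real.sqrt (Phi (P n) 1 / n)) tendsto_const_nhds ?_ ?_ ?_
  · have h0 : Tendsto (fun x : ℝ => Real.sqrt x) (nhds 0) (nhds 0) := by
      simpa [Real.sqrt_zero] using (Real.continuous_sqrt.tendsto 0)
    exact h0.comp h_one_time
  · filter_upwards [eventually_ge_atTop 1] with n hn
    have hpos : 0 < n := hn
    refine le_trans ?_ (le_ciSup (hbdd n hpos) 0)
    exact div_nonneg (hphinn n 0) (by positivity)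
  · filter_upwards [eventually_ge_atTop 1] with n hn
    exact ciSup_le fun k => hupper n hn k
end
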